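/- Let X be a finite set of N points in ℝ², let K ≥ 1 be an integer, and let L be a set of K affine lines in ℝ², each disjoint from X, such that every cell of L contains at most one point of X. Then for every real number d ≥ 1, if X is contained in a Jordan curve with stabbing number at most d, then d ≥ N/K. -/

import Mathlib

/-!
Cut the Jordan curve at a point of `X` and parametrize it by `(-π, π]`. Two points of `X` that
are consecutive along the curve lie in different cells, so the arc between them crosses a line
of `L`: this gives `N` crossings, one in each of the `N` arcs. A connected piece of `J ∩ l`
avoids `X`, so it stays inside one arc; hence the crossings lying on a common line `l` are in
pairwise different components of `J ∩ l`, so there are at most `⌊d⌋` of them, and `N ≤ K ⌊d⌋`.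
-/

open Set

/-- Points of the plane. -/
abbrev Pt := ℝ × ℝ

/-- An affine line in ℝ², given by a nontrivial linear equation. -/
def IsAffLine (l : Set Pt) : Prop :=
  ∃ a b c : ℝ, (a ≠ 0 ∨ b ≠ 0) ∧ l = {p : Pt | a * p.1 + b * p.2 = c}

/-- An open half-plane in ℝ². -/
def IsOpenHalfPlane (H : Set Pt) : Prop :=
  ∃ a b c : ℝ, (a ≠ 0 ∨ b ≠ 0) ∧ H = {p : Pt | a * p.1 + b * p.2 < c}

/-- `A` and `B` are linearly separable: some affine line has `A` strictly on
one side and `B` strictly on the other side. -/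
def LinSep (A B : Set Pt) : Prop :=
  ∃ a b c : ℝ, (a ≠ 0 ∨ b ≠ 0) ∧ (∀ p ∈ A, a * p.1 + b * p.2 < c) ∧
    (∀ p ∈ B, c < a * p.1 + b * p.2)

/-- General position: no three (distinct) points of `X` are collinear. -/
def GenPos (X : Set Pt) : Prop :=
  ∀ p ∈ X, ∀ q ∈ X, ∀ r ∈ X, p ≠ q → p ≠ r → q ≠ r →
    ¬ Collinear ℝ ({p, q, r} : Set Pt)

/-- Convex position: no point of `X` lies in the convex hull of the others. -/
def ConvexPos (X : Set Pt) : Prop :=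
  ∀ p ∈ X, p ∉ convexHull ℝ (X \ {p})

/-- A cell of an arrangement `L` of lines: a connected component of the
complement of the union of the lines. -/
def IsCell (L : Set (Set Pt)) (cell : Set Pt) : Prop :=
  ∃ p ∈ (⋃₀ L)ᶜ, cell = connectedComponentIn (⋃₀ L)ᶜ p

/-- `S` has at most `d` connected components: among any `d + 1` points of `S`,
two lie in the same connected component of `S`. -/
def CompsLE (S : Set Pt) (d : ℕ) : Prop :=
  ∀ f : Fin (d + 1) → Pt, (∀ i, f i ∈ S) →
    ∃ i j, i ≠ j ∧ connectedComponentIn S (f i) = connectedComponentIn S (f j)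

/-- A Jordan curve: the image of a continuous injective map from the unit
circle to the plane. -/
def IsJordanCurve (J : Set Pt) : Prop :=
  ∃ f : EuclideanSpace ℝ (Fin 2) → Pt,
    ContinuousOn f (Metric.sphere 0 1) ∧ Set.InjOn f (Metric.sphere 0 1) ∧
      J = f '' (Metric.sphere 0 1)

/-- `J` has stabbing number at most `d` (a natural number): every affine line
meets `J` in at most `d` connected components. -/
def StabLE (J : Set Pt) (d : ℕ) : Prop :=
  ∀ l, IsAffLine l → CompsLE (J ∩ l) d

/-- `J` has stabbing number at most a real number `d`: every affine line meets
`J` in at most `⌊d⌋₊` connected components. -/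
def StabLER (J : Set Pt) (d : ℝ) : Prop :=
  ∀ l, IsAffLine l → CompsLE (J ∩ l) ⌊d⌋₊

open Real Complex Metric

theorem IsPreconnected.inter_preimage_of_injOn {α β : Type*} [TopologicalSpace α]
    [TopologicalSpace β] [T2Space β] {s : Set α} {f : α → β} {C : Set β}
    (hC : IsPreconnected C) (hs : IsCompact s) (hf : ContinuousOn f s) (hinj : InjOn f s)
    (hCs : C ⊆ f '' s) : IsPreconnected (s ∩ f ⁻¹' C) := by
  have : CompactSpace s := isCompact_iff_compactSpace.mp hs
  have hemb : Topology.IsEmbedding (s.domRestrict f) :=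
    (hf.domRestrict.isClosedEmbedding (injOn_iff_injective.mp hinj)).isEmbedding
  have hpre : IsPreconnected (s.domRestrict f ⁻¹' C) := by
    rwa [← hemb.isInducing.isPreconnected_image, image_preimage_eq_of_subset]
    rwa [range_domRestrict]
  have := hpre.image _ continuous_subtype_val.continuousOn
  rwa [domRestrict_eq, preimage_comp, Subtype.image_preimage_coe] at this

namespace Complex

theorem exp_arg_mul_I_of_norm_eq_one {z : ℂ} (hz : ‖z‖ = 1) : exp (arg z * I) = z := by
  simpa [hz] using norm_mul_exp_arg_mul_I z

theorem arg_exp_mul_I_of_mem_Ioc {s : ℝ} (hs : s ∈ Ioc (-π) π) : arg (exp (s * I)) = s := by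
  rw [arg_exp_mul_I, toIocMod_eq_self]
  rwa [neg_add_eq_sub, two_mul, add_sub_cancel_right]

theorem mem_slitPlane_of_norm_eq_one {z : ℂ} (hz : ‖z‖ = 1) (h : z ≠ -1) : z ∈ slitPlane := by
  refine mem_slitPlane_iff_arg.mpr ⟨fun harg => h ?_, norm_ne_zero_iff.mp (by simp [hz])⟩
  rw [← exp_arg_mul_I_of_norm_eq_one hz, harg, exp_pi_mul_I]

end Complex

section UnitCircle

variable {α : Type*} {F : ℂ → α}

theorem exists_mem_Ioc_of_mem_image_sphere {p : α} (hp : p ∈ F '' sphere 0 1) :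
    ∃ s ∈ Ioc (-π) π, F (exp (s * I)) = p := by
  obtain ⟨z, hz, rfl⟩ := hp
  refine ⟨arg z, ⟨neg_pi_lt_arg z, arg_le_pi z⟩, ?_⟩
  rw [exp_arg_mul_I_of_norm_eq_one (mem_sphere_zero_iff_norm.mp hz)]

theorem Set.InjOn.comp_exp_mul_I (hF : InjOn F (sphere 0 1)) :
    InjOn (fun s : ℝ => F (exp (s * I))) (Ioc (-π) π) := fun s hs v hv h => by
  rw [← arg_exp_mul_I_of_mem_Ioc hs, ← arg_exp_mul_I_of_mem_Ioc hv, hF (by simp) (by simp) h]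

/-- Away from `F (-1)`, the inverse of `s ↦ F (exp (s * I))` on `(-π, π]` is continuous (it is
`arg ∘ F⁻¹`), so it maps preconnected sets to intervals. -/
theorem mem_of_mem_uIcc_of_isPreconnected [TopologicalSpace α] [T2Space α]
    (hFc : ContinuousOn F (sphere 0 1)) (hFi : InjOn F (sphere 0 1)) {C : Set α}
    (hC : IsPreconnected C) (hCF : C ⊆ F '' sphere 0 1)
    (hC₁ : F (-1) ∉ C) {s v u : ℝ} (hs : s ∈ Ioc (-π) π) (hv : v ∈ Ioc (-π) π)
    (hsC : F (exp (s * I)) ∈ C) (hvC : F (exp (v * I)) ∈ C) (hu : u ∈ uIcc s v) :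
    F (exp (u * I)) ∈ C := by
  set P := sphere (0 : ℂ) 1 ∩ F ⁻¹' C
  have hP : IsPreconnected P := hC.inter_preimage_of_injOn (isCompact_sphere 0 1) hFc hFi hCF
  have harg : ContinuousOn arg P := fun z hz =>
    (continuousAt_arg (mem_slitPlane_of_norm_eq_one (mem_sphere_zero_iff_norm.mp hz.1)
      (by rintro rfl; exact hC₁ hz.2))).continuousWithinAt
  have hmem : ∀ t ∈ Ioc (-π) π, F (exp (t * I)) ∈ C → t ∈ arg '' P := fun t ht htC =>
    ⟨exp (t * I), ⟨by simp, htC⟩, arg_exp_mul_I_of_mem_Ioc ht⟩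
  obtain ⟨z, hz, rfl⟩ :=
    (hP.image arg harg).ordConnected.uIcc_subset (hmem s hs hsC) (hmem v hv hvC) hu
  rw [exp_arg_mul_I_of_norm_eq_one (mem_sphere_zero_iff_norm.mp hz.1)]
  exact hz.2

end UnitCircle

theorem IsJordanCurve.exists_param {J : Set Pt} (hJ : IsJordanCurve J) {q : Pt} (hq : q ∈ J) :
    ∃ F : ℂ → Pt, ContinuousOn F (sphere 0 1) ∧ InjOn F (sphere 0 1) ∧
      F '' sphere 0 1 = J ∧ F (-1) = q := by
  obtain ⟨f, hfc, hfi, rfl⟩ := hJ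
  obtain ⟨p, hp, rfl⟩ := hq
  let e := orthonormalBasisOneI.repr
  let a : Circle := ⟨-e.symm p, mem_sphere_zero_iff_norm.mpr (by simpa using hp)⟩
  let g : ℂ ≃ₗᵢ[ℝ] EuclideanSpace ℝ (Fin 2) := (rotation a).trans e
  have hg : g '' sphere 0 1 = sphere 0 1 := by simp [g.image_sphere]
  have hmaps : MapsTo g (sphere 0 1) (sphere 0 1) := hg ▸ mapsTo_image _ _
  refine ⟨f ∘ g, hfc.comp g.continuous.continuousOn hmaps, hfi.comp g.injective.injOn hmaps,
    by rw [image_comp, hg], ?_⟩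
  show f (e (a * -1)) = f p
  simp [a]

theorem Finset.exists_greatest_lt {α : Type*} [LinearOrder α] {s : Finset α} {a t : α}
    (ha : a ∈ s) (hat : a < t) : ∃ b ∈ s, b < t ∧ ∀ u ∈ s, u < t → u ≤ b := by
  obtain ⟨b, hb, hbmax⟩ := {u ∈ s | u < t}.exists_max_image id ⟨a, mem_filter.mpr ⟨ha, hat⟩⟩
  obtain ⟨hbs, hbt⟩ := mem_filter.mp hb
  exact ⟨b, hbs, hbt, fun u hu hut => hbmax u (mem_filter.mpr ⟨hu, hut⟩)⟩

theorem CompsLE.card_le {S : Set Pt} {d : ℕ} (hS : CompsLE S d) {ι : Type*} {T : Finset ι}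
    {p : ι → Pt} (hp : ∀ i ∈ T, p i ∈ S)
    (hne : ∀ i ∈ T, ∀ j ∈ T, i ≠ j →
      connectedComponentIn S (p i) ≠ connectedComponentIn S (p j)) :
    T.card ≤ d := by
  by_contra! h
  let k : Fin (d + 1) ↪ T := (Fin.castLEEmb h).trans T.equivFin.symm.toEmbedding
  obtain ⟨i, j, hij, hcomp⟩ := hS (fun i => p (k i)) fun i => hp _ (k i).2
  exact hne _ (k i).2 _ (k j).2 (fun h => hij (k.injective (Subtype.ext h))) hcomp

theorem exists_mem_sUnion_of_isPreconnected {X : Finset Pt} {L : Set (Set Pt)}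
    (hcells : ∀ cell, IsCell L cell → ((↑X : Set Pt) ∩ cell).ncard ≤ 1) {S : Set Pt}
    (hS : IsPreconnected S) {x y : Pt} (hx : x ∈ X) (hy : y ∈ X) (hxS : x ∈ S) (hyS : y ∈ S)
    (hxy : x ≠ y) (hxL : x ∉ ⋃₀ L) : ∃ p ∈ S, p ∈ ⋃₀ L := by
  by_contra! h
  have hsub : S ⊆ connectedComponentIn (⋃₀ L)ᶜ x := hS.subset_connectedComponentIn hxS h
  have hcell := hcells _ ⟨x, hxL, rfl⟩
  rw [ncard_le_one (X.finite_toSet.inter_of_left _)] at hcell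
  exact hxy (hcell x ⟨hx, mem_connectedComponentIn hxL⟩ y ⟨hy, hsub hyS⟩)

theorem exists_mem_Ioo_mem_of_continuous {X : Finset Pt} {L : Set (Set Pt)}
    (hLX : ∀ l ∈ L, Disjoint l ↑X)
    (hcells : ∀ cell, IsCell L cell → ((↑X : Set Pt) ∩ cell).ncard ≤ 1) {γ : ℝ → Pt}
    (hγ : Continuous γ) {a b : ℝ} (hab : a ≤ b) (ha : γ a ∈ X) (hb : γ b ∈ X)
    (hne : γ a ≠ γ b) : ∃ σ ∈ Ioo a b, ∃ l ∈ L, γ σ ∈ l := by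
  have hX : ∀ x ∈ X, x ∉ ⋃₀ L := fun x hx ⟨l, hl, hxl⟩ => disjoint_left.mp (hLX l hl) hxl hx
  obtain ⟨_, ⟨σ, hσ, rfl⟩, l, hl, hσl⟩ := exists_mem_sUnion_of_isPreconnected hcells
    (isPreconnected_Icc.image γ hγ.continuousOn) ha hb ⟨a, left_mem_Icc.mpr hab, rfl⟩
    ⟨b, right_mem_Icc.mpr hab, rfl⟩ hne (hX _ ha)
  have hσX : γ σ ∉ X := fun h => hX _ h ⟨l, hl, hσl⟩
  refine ⟨σ, ⟨hσ.1.lt_of_ne ?_, hσ.2.lt_of_ne ?_⟩, l, hl, hσl⟩ <;> rintro rfl <;> contradiction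

/-- The crossing `σ x` is taken between the parameter `θ x` of `x` and the largest parameter below
it among `-π` and the parameters of points of `X`. -/
theorem exists_separated_line_crossings {X : Finset Pt} {L : Set (Set Pt)}
    (hLX : ∀ l ∈ L, Disjoint l ↑X)
    (hcells : ∀ cell, IsCell L cell → ((↑X : Set Pt) ∩ cell).ncard ≤ 1) {γ : ℝ → Pt}
    (hγ : Continuous γ) (hinj : InjOn γ (Ioc (-π) π)) (hX : ∀ x ∈ X, ∃ s ∈ Ioc (-π) π, γ s = x)
    (hπ : γ (-π) = γ π) (hπX : γ π ∈ X) (hcard : 1 < X.card) :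
    ∃ (σ : Pt → ℝ) (ℓ : Pt → Set Pt), ∀ x ∈ X, ℓ x ∈ L ∧ γ (σ x) ∈ ℓ x ∧ σ x ∈ Ioo (-π) π ∧
      ∀ y ∈ X, x ≠ y → ∃ u ∈ uIcc (σ x) (σ y), γ u ∈ X := by
  choose! θ hθ hγθ using hX
  have hθinj : ∀ x ∈ X, ∀ y ∈ X, θ x = θ y → x = y := fun x hx y hy h => by
    rw [← hγθ x hx, ← hγθ y hy, h]
  have hgap : ∀ x ∈ X, ∃ σ, ∃ l ∈ L, γ σ ∈ l ∧ -π < σ ∧ σ < θ x ∧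
      ∀ y ∈ X, θ y < θ x → θ y < σ := by
    intro x hx
    obtain ⟨b, hb, hbx, hbmax⟩ :=
      Finset.exists_greatest_lt (Finset.mem_insert_self (-π) (X.image θ)) (hθ x hx).1
    simp only [Finset.mem_insert, Finset.mem_image] at hb hbmax
    have hyb : ∀ y ∈ X, θ y < θ x → θ y ≤ b := fun y hy h => hbmax _ (.inr ⟨y, hy, rfl⟩) h
    have hγb : γ b ∈ X ∧ γ b ≠ x := by
      rcases hb with rfl | ⟨y, hy, rfl⟩
      · refine ⟨hπ ▸ hπX, fun hbx' => ?_⟩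
        -- then `θ x = π`, and any other point `y` of `X` would have `-π < θ y ≤ b = -π`
        have hθx : θ x = π :=
          hinj (hθ x hx) ⟨by linarith [pi_pos], le_rfl⟩ (by rw [hγθ x hx, ← hbx', hπ])
        obtain ⟨y, hy, hyx⟩ := X.exists_mem_ne hcard x
        have hyx' : θ y < θ x :=
          lt_of_le_of_ne (hθx ▸ (hθ y hy).2) fun h => hyx (hθinj y hy x hx h)
        linarith [hyb y hy hyx', (hθ y hy).1]
      · rw [hγθ y hy]
        exact ⟨hy, by rintro rfl; exact hbx.ne rfl⟩
    obtain ⟨σ, hσ, l, hl, hσl⟩ := exists_mem_Ioo_mem_of_continuous hLX hcells hγ hbx.le hγb.1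
      (by rwa [hγθ x hx]) (by rw [hγθ x hx]; exact hγb.2)
    exact ⟨σ, l, hl, hσl, (hbmax _ (.inl rfl) (hθ x hx).1).trans_lt hσ.1, hσ.2,
      fun y hy h => (hyb y hy h).trans_lt hσ.1⟩
  choose! σ ℓ hℓ hσℓ hσπ hσx hσsep using hgap
  refine ⟨σ, ℓ, fun x hx => ⟨hℓ x hx, hσℓ x hx, ⟨hσπ x hx, (hσx x hx).trans_le (hθ x hx).2⟩,
    fun y hy hxy => ?_⟩⟩
  rcases lt_or_gt_of_ne fun h => hxy (hθinj x hx y hy h) with h | h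
  · exact ⟨θ x, mem_uIcc.mpr <| .inl ⟨(hσx x hx).le, (hσsep y hy x hx h).le⟩, (hγθ x hx).symm ▸ hx⟩
  · exact ⟨θ y, mem_uIcc.mpr <| .inr ⟨(hσx y hy).le, (hσsep x hx y hy h).le⟩, (hγθ y hy).symm ▸ hy⟩

theorem card_le_mul_card_of_subset_jordan {X : Finset Pt} {L : Finset (Set Pt)} {F : ℂ → Pt}
    (hFc : ContinuousOn F (sphere 0 1)) (hFi : InjOn F (sphere 0 1))
    (hX : ↑X ⊆ F '' sphere 0 1) (h₁ : F (-1) ∈ X) (hcard : 1 < X.card)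
    (hLX : ∀ l ∈ L, Disjoint l ↑X)
    (hcells : ∀ cell, IsCell ↑L cell → ((↑X : Set Pt) ∩ cell).ncard ≤ 1) {m : ℕ}
    (hm : ∀ l ∈ L, CompsLE (F '' sphere 0 1 ∩ l) m) :
    X.card ≤ m * L.card := by
  set γ : ℝ → Pt := fun s => F (exp (s * I))
  have hγ : Continuous γ := hFc.comp_continuous (by fun_prop) fun s => by simp
  have hγJ : ∀ s, γ s ∈ F '' sphere 0 1 := fun s => ⟨_, by simp, rfl⟩
  obtain ⟨σ, ℓ, hσ⟩ := exists_separated_line_crossings (L := ↑L) hLX hcells hγ hFi.comp_exp_mul_I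
    (fun x hx => exists_mem_Ioc_of_mem_image_sphere (hX hx)) (by simp [γ])
    (by simpa [γ] using h₁) hcard
  refine Finset.card_le_mul_card_image_of_maps_to (fun x hx => (hσ x hx).1) m fun l hl => ?_
  refine (hm l hl).card_le (p := γ ∘ σ) (fun x hx => ?_) fun x hx y hy hxy hcomp => ?_
  · obtain ⟨hxX, rfl⟩ := Finset.mem_filter.mp hx
    exact ⟨hγJ _, (hσ x hxX).2.1⟩
  obtain ⟨hxX, rfl⟩ := Finset.mem_filter.mp hx
  obtain ⟨hyX, hyx⟩ := Finset.mem_filter.mp hy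
  obtain ⟨hxL, hxl, hxπ, hsep⟩ := hσ x hxX
  obtain ⟨-, hyl, hyπ, -⟩ := hσ y hyX
  obtain ⟨u, hu, huX⟩ := hsep y hyX hxy
  set C := connectedComponentIn (F '' sphere 0 1 ∩ ℓ x) (γ (σ x))
  have hCX : ∀ z ∈ X, z ∉ C := fun z hz hzC =>
    disjoint_left.mp (hLX _ hxL) (connectedComponentIn_subset _ _ hzC).2 hz
  refine hCX _ huX (mem_of_mem_uIcc_of_isPreconnected hFc hFi isPreconnected_connectedComponentIn
    ((connectedComponentIn_subset _ _).trans inter_subset_left) (hCX _ h₁)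
    (Ioo_subset_Ioc_self hxπ) (Ioo_subset_Ioc_self hyπ) (mem_connectedComponentIn ⟨hγJ _, hxl⟩)
    ?_ hu)
  simp only [Function.comp_apply] at hcomp
  exact hcomp ▸ mem_connectedComponentIn ⟨hγJ _, hyx ▸ hyl⟩

/-- Remark after Lemma 4.3. -/
theorem stmt_9 (X : Finset Pt) (N : ℕ) (hN : X.card = N) (K : ℕ) (hK : 1 ≤ K)
    (L : Finset (Set Pt)) (hL : L.card = K)
    (hlines : ∀ l ∈ L, IsAffLine l ∧ Disjoint l (↑X : Set Pt))
    (hcells : ∀ cell, IsCell ↑L cell → ((↑X : Set Pt) ∩ cell).ncard ≤ 1) :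
    ∀ d : ℝ, 1 ≤ d →
      (∃ J, IsJordanCurve J ∧ (↑X : Set Pt) ⊆ J ∧ StabLER J d) →
      (N : ℝ) / K ≤ d := by
  rintro d hd ⟨J, hJ, hXJ, hstab⟩
  have hd₁ : 1 ≤ ⌊d⌋₊ := Nat.le_floor (by exact_mod_cast hd)
  suffices hNK : N ≤ ⌊d⌋₊ * K by
    rw [div_le_iff₀ (by exact_mod_cast hK)]
    calc (N : ℝ) ≤ ⌊d⌋₊ * K := by exact_mod_cast hNK
      _ ≤ d * K := by gcongr; exact Nat.floor_le (by linarith)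
  rcases le_or_gt N 1 with hN₁ | hN₁
  · nlinarith
  obtain ⟨q, hq⟩ := Finset.card_pos.mp (hN ▸ hN₁.trans' one_pos)
  obtain ⟨F, hFc, hFi, rfl, hFq⟩ := hJ.exists_param (hXJ hq)
  subst hN hL
  exact card_le_mul_card_of_subset_jordan hFc hFi hXJ (hFq ▸ hq) hN₁
    (fun l hl => (hlines l hl).2) hcells fun l hl => hstab l (hlines l hl).1
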